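/- arXiv:1604.06035 — 2 statements merged into one kernel-verified Lean document; each statement's English description precedes it below -/
import Mathlib

section
/- Let (a_j), (b_j) be sequences of nonnegative reals and q ∈ (0,1) with a₁ ≤ q, b₁ ≤ q, and suppose for all j ≥ 1: b_{j+1} ≤ C₁(b_j·a_j + a_j·b_j² + b_j³) and a_{j+1} ≤ a_j + C₁(b_j² + a_j·b_j + b_j³ + a_j·b_j²), where C₁ ≥ 1 is a constant. Then there exists q₀ ∈ (0,1) such that if q ≤ q₀, then for all j ≥ 1: b_j ≤ q^{(j+1)/2}, a_j ≤ q(1 − q^{j/2})/(1 − q^{1/2}), and a_{j+1} − a_j ≤ q·q^{j/2}. -/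
set_option maxHeartbeats 1000000 in
/-- Abstract convergence estimate for the recursion of normal form kernels. -/
theorem normal_form_recursion_estimates (C₁ : ℝ) (hC₁ : 1 ≤ C₁) :
    ∃ q₀ ∈ Set.Ioo (0 : ℝ) 1, ∀ q ∈ Set.Ioo (0 : ℝ) 1, q ≤ q₀ →
      ∀ a b : ℕ → ℝ,
        (∀ j, 0 ≤ a j) → (∀ j, 0 ≤ b j) → a 1 ≤ q → b 1 ≤ q →
        (∀ j ≥ 1, b (j + 1) ≤ C₁ * (b j * a j + a j * (b j) ^ 2 + (b j) ^ 3)) →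
        (∀ j ≥ 1, a (j + 1) ≤ a j +
          C₁ * ((b j) ^ 2 + a j * b j + (b j) ^ 3 + a j * (b j) ^ 2)) →
        ∀ j ≥ 1,
          b j ≤ q ^ ((j + 1 : ℝ) / 2) ∧
          a j ≤ q * (1 - q ^ ((j : ℝ) / 2)) / (1 - q ^ ((1 : ℝ) / 2)) ∧
          a (j + 1) - a j ≤ q * q ^ ((j : ℝ) / 2) := by
  have hC₁0 : 0 < C₁ := lt_of_lt_of_le one_pos hC₁
  refine ⟨1 / (36 * C₁ ^ 2), ⟨by positivity, by
    rw [div_lt_one (by positivity)]; nlinarith⟩, ?_⟩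
  rintro q ⟨hq0, hq1⟩ hqle a b ha0 hb0 ha1 hb1 hbrec harec
  set s := Real.sqrt q with hs_def
  have hs0 : 0 < s := Real.sqrt_pos.mpr hq0
  have hsq : s ^ 2 = q := Real.sq_sqrt hq0.le
  have hs1 : s < 1 := by
    rw [hs_def, show (1 : ℝ) = Real.sqrt 1 by simp]
    exact Real.sqrt_lt_sqrt hq0.le hq1
  have hs6 : 6 * C₁ * s ≤ 1 := by
    have h1 : s ≤ 1 / (6 * C₁) := by
      have := Real.sqrt_le_sqrt hqle
      rwa [show (1 / (36 * C₁ ^ 2) : ℝ) = (1 / (6 * C₁)) ^ 2 by ring,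
        Real.sqrt_sq (by positivity)] at this
    calc 6 * C₁ * s ≤ 6 * C₁ * (1 / (6 * C₁)) := by
          exact mul_le_mul_of_nonneg_left h1 (by positivity)
      _ = 1 := by field_simp
  have hs_half : s ≤ 1 / 2 := by nlinarith
  have h1s : 0 < 1 - s := by linarith
  -- rpow ↔ powers of s
  have hpow : ∀ n : ℕ, q ^ ((n : ℝ) / 2) = s ^ n := by
    intro n
    rw [hs_def, Real.sqrt_eq_rpow, ← Real.rpow_natCast (q ^ ((1 : ℝ) / 2)) n,
      ← Real.rpow_mul hq0.le]
    ring_nf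
  -- one inductive step
  have step : ∀ j : ℕ, 1 ≤ j → b j ≤ s ^ (j + 1) → a j ≤ q * (1 - s ^ j) / (1 - s) →
      a (j + 1) - a j ≤ q * s ^ j ∧ b (j + 1) ≤ s ^ (j + 2) ∧
        a (j + 1) ≤ q * (1 - s ^ (j + 1)) / (1 - s) := by
    intro j hj hb ha
    have hu0 : (0 : ℝ) ≤ s ^ j := by positivity
    have hu1 : s ^ j ≤ 1 := pow_le_one₀ hs0.le hs1.le
    have ht0 : (0 : ℝ) ≤ s ^ (j + 1) := by positivity
    have hbq : b j ≤ q := by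
      calc b j ≤ s ^ (j + 1) := hb
        _ ≤ s ^ 2 := pow_le_pow_of_le_one hs0.le hs1.le (by omega)
        _ = q := hsq
    have ha2q : a j ≤ 2 * q := by
      have h2 : q * (1 - s ^ j) / (1 - s) ≤ 2 * q := by
        rw [div_le_iff₀ h1s]
        nlinarith
      linarith [ha.trans h2]
    have hbs : b j ≤ s * s ^ j := by
      calc b j ≤ s ^ (j + 1) := hb
        _ = s * s ^ j := by ring
    -- difference bound
    have hsum : b j + a j + b j ^ 2 + a j * b j ≤ 6 * q := by nlinarith [hb0 j, ha0 j]
    have hprod : b j ^ 2 + a j * b j + b j ^ 3 + a j * b j ^ 2 ≤ (s * s ^ j) * (6 * q) := by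
      have heq : b j ^ 2 + a j * b j + b j ^ 3 + a j * b j ^ 2
          = b j * (b j + a j + b j ^ 2 + a j * b j) := by ring
      rw [heq]
      exact mul_le_mul hbs hsum (by nlinarith [hb0 j, ha0 j, sq_nonneg (b j)]) (by positivity)
    have hdiff : a (j + 1) - a j ≤ q * s ^ j := by
      have h1 := harec j hj
      have h2 : C₁ * (b j ^ 2 + a j * b j + b j ^ 3 + a j * b j ^ 2) ≤ q * s ^ j := by
        calc C₁ * (b j ^ 2 + a j * b j + b j ^ 3 + a j * b j ^ 2)
            ≤ C₁ * ((s * s ^ j) * (6 * q)) := by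
              exact mul_le_mul_of_nonneg_left hprod hC₁0.le
          _ = (6 * C₁ * s) * (q * s ^ j) := by ring
          _ ≤ 1 * (q * s ^ j) := by
              exact mul_le_mul_of_nonneg_right hs6 (by positivity)
          _ = q * s ^ j := by ring
      linarith
    refine ⟨hdiff, ?_, ?_⟩
    · -- b step
      have hsum2 : a j + a j * b j + b j ^ 2 ≤ 5 * q := by nlinarith [hb0 j, ha0 j]
      have hprod2 : b j * a j + a j * b j ^ 2 + b j ^ 3
          ≤ s ^ (j + 1) * (5 * q) := by
        have heq : b j * a j + a j * b j ^ 2 + b j ^ 3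
            = b j * (a j + a j * b j + b j ^ 2) := by ring
        rw [heq]
        exact mul_le_mul hb hsum2 (by nlinarith [hb0 j, ha0 j, sq_nonneg (b j)]) ht0
      calc b (j + 1) ≤ C₁ * (b j * a j + a j * b j ^ 2 + b j ^ 3) := hbrec j hj
        _ ≤ C₁ * (s ^ (j + 1) * (5 * q)) := mul_le_mul_of_nonneg_left hprod2 hC₁0.le
        _ = (5 * C₁ * s) * (s ^ (j + 1) * s) := by rw [← hsq]; ring
        _ ≤ 1 * (s ^ (j + 1) * s) := by
            refine mul_le_mul_of_nonneg_right (by linarith) (by positivity)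
        _ = s ^ (j + 2) := by ring
    · -- a step
      have heq : q * (1 - s ^ j) / (1 - s) + q * s ^ j
          = q * (1 - s ^ (j + 1)) / (1 - s) := by
        field_simp
        ring
      calc a (j + 1) = a j + (a (j + 1) - a j) := by ring
        _ ≤ q * (1 - s ^ j) / (1 - s) + q * s ^ j := add_le_add ha hdiff
        _ = q * (1 - s ^ (j + 1)) / (1 - s) := heq
  -- main induction
  have key : ∀ j : ℕ, 1 ≤ j → b j ≤ s ^ (j + 1) ∧ a j ≤ q * (1 - s ^ j) / (1 - s) := by
    intro j hj
    induction j, hj using Nat.le_induction with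
    | base =>
      constructor
      · simpa [hsq] using hb1
      · have : q * (1 - s ^ 1) / (1 - s) = q := by
          rw [pow_one]
          field_simp
        rw [this]; exact ha1
    | succ j hj ih =>
      obtain ⟨ihb, iha⟩ := ih
      obtain ⟨_, h2, h3⟩ := step j hj ihb iha
      exact ⟨h2, h3⟩
  intro j hj
  obtain ⟨hb, ha⟩ := key j hj
  obtain ⟨hdiff, _, _⟩ := step j hj hb ha
  have e1 : q ^ ((j + 1 : ℝ) / 2) = s ^ (j + 1) := by
    have := hpow (j + 1); push_cast at this; exact this
  have e2 : q ^ ((j : ℝ) / 2) = s ^ j := hpow j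
  have e3 : q ^ ((1 : ℝ) / 2) = s := by
    have := hpow 1; push_cast at this; simpa using this
  rw [e1, e2, e3]
  exact ⟨hb, ha, hdiff⟩
end

section
/- Let E : [0, T₀/ε] → [0, ∞) be differentiable and satisfy E'(t) ≤ Cε(E(t) + ε^{1/2}E(t)^{3/2} + 1) with E(0) ≤ E₀. Then there exist ε₀ > 0 and M > 0 (depending only on C, T₀, E₀) such that for all ε ∈ (0, ε₀), E(t) ≤ M for all t ∈ [0, T₀/ε]. -/
/-!
The nonlinear term is harmless as long as `ε E³ ≤ 1`: then `ε^{1/2} E^{3/2} ≤ 1`, so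
`E' ≤ Cε (E + 2) < Cε E + 3Cε`. Hence `E` cannot cross the Grönwall barrier
`B = gronwallBound E₀ (Cε) (3Cε)`, which solves `B' = Cε B + 3Cε`, `B 0 = E₀`, and which by
rescaling time equals `gronwallBound E₀ C (3C) (ε t) ≤ gronwallBound E₀ C (3C) T₀ =: M` for
`t ≤ T₀ / ε`. Taking `ε₀ = M⁻³` keeps `ε E³ ≤ 1` below the barrier, which closes the argument.
The constant `3` instead of `2` makes the barrier strict, as the fencing theorem requires.
-/

open Set

theorem gronwallBound_mul_mul (δ K L ε x : ℝ) :
    gronwallBound δ (K * ε) (L * ε) x = gronwallBound δ K L (ε * x) := by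
  rcases eq_or_ne ε 0 with rfl | hε
  · simp [gronwallBound_K0, gronwallBound_x0]
  rcases eq_or_ne K 0 with rfl | hK
  · simp only [zero_mul, gronwallBound_K0]; ring
  simp only [gronwallBound_of_K_ne_0 hK, gronwallBound_of_K_ne_0 (mul_ne_zero hK hε),
    mul_div_mul_right _ _ hε, mul_left_comm K ε x, mul_assoc]

theorem rpow_half_mul_rpow_three_halves_le_one {ε x : ℝ} (hε : 0 ≤ ε) (hx : 0 ≤ x)
    (h : ε * x ^ 3 ≤ 1) : ε ^ (1 / 2 : ℝ) * x ^ (3 / 2 : ℝ) ≤ 1 := by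
  have hx3 : x ^ (3 / 2 : ℝ) = (x ^ 3) ^ (1 / 2 : ℝ) := by
    rw [← Real.rpow_natCast, ← Real.rpow_mul hx]; norm_num
  rw [hx3, ← Real.mul_rpow hε (by positivity)]
  exact Real.rpow_le_one (by positivity) h (by norm_num)

theorem energy_deriv_lt_linear_of_small {C ε e e' : ℝ} (hC : 0 < C) (hε : 0 < ε) (he : 0 ≤ e)
    (hsmall : ε * e ^ 3 ≤ 1) (h : e' ≤ C * ε * (e + ε ^ (1 / 2 : ℝ) * e ^ (3 / 2 : ℝ) + 1)) :
    e' < C * ε * e + 3 * C * ε := by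
  have := rpow_half_mul_rpow_three_halves_le_one hε.le he hsmall
  nlinarith [mul_pos hC hε]

/-- Gronwall-type bound: if `E' ≤ Cε(E + ε^{1/2}E^{3/2} + 1)` on `[0, T₀/ε]` and
`E(0) ≤ E₀`, then `E` stays `O(1)`-bounded on `[0, T₀/ε]` for all small `ε`. -/
theorem energy_gronwall (C T₀ E₀ : ℝ) (hC : 0 < C) (hT₀ : 0 < T₀) (hE₀ : 0 < E₀) :
    ∃ ε₀ > (0 : ℝ), ∃ M > (0 : ℝ), ∀ ε ∈ Ioo (0 : ℝ) ε₀, ∀ E E' : ℝ → ℝ,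
      (∀ t ∈ Icc (0 : ℝ) (T₀ / ε), 0 ≤ E t) →
      (∀ t ∈ Icc (0 : ℝ) (T₀ / ε), HasDerivAt E (E' t) t) →
      (∀ t ∈ Icc (0 : ℝ) (T₀ / ε),
        E' t ≤ C * ε * (E t + ε ^ ((1 : ℝ) / 2) * (E t) ^ ((3 : ℝ) / 2) + 1)) →
      E 0 ≤ E₀ →
      ∀ t ∈ Icc (0 : ℝ) (T₀ / ε), E t ≤ M := by
  have hmono := gronwallBound_mono hE₀.le (by positivity : 0 ≤ 3 * C) hC.le
  set M := gronwallBound E₀ C (3 * C) T₀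
  have hM : 0 < M := hE₀.trans_le <| gronwallBound_x0 E₀ C (3 * C) ▸ hmono hT₀.le
  refine ⟨(M ^ 3)⁻¹, by positivity, M, hM, ?_⟩
  rintro ε ⟨hε, hεM⟩ E E' hE_nonneg hE_deriv hE_ineq hE_init
  have hB_le : ∀ t ∈ Icc (0 : ℝ) (T₀ / ε), gronwallBound E₀ (C * ε) (3 * C * ε) t ≤ M :=
    fun t ht => gronwallBound_mul_mul E₀ C (3 * C) ε t ▸
      hmono (by rw [mul_comm]; exact (le_div_iff₀ hε).mp ht.2)
  have hbarrier := image_le_of_deriv_right_lt_deriv_boundary (a := 0) (b := T₀ / ε)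
    (fun t ht => (hE_deriv t ht).continuousAt.continuousWithinAt)
    (fun t ht => (hE_deriv t (Ico_subset_Icc_self ht)).hasDerivWithinAt)
    (by rwa [gronwallBound_x0]) (hasDerivAt_gronwallBound E₀ (C * ε) (3 * C * ε)) ?_
  · exact fun t ht => (hbarrier ht).trans (hB_le t ht)
  intro t ht hEB
  have ht' := Ico_subset_Icc_self ht
  have hEt := hE_nonneg t ht'
  have hEM : E t ≤ M := hEB ▸ hB_le t ht'
  have hsmall : ε * E t ^ 3 ≤ 1 :=
    calc ε * E t ^ 3 ≤ (M ^ 3)⁻¹ * M ^ 3 := by gcongr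
      _ = 1 := inv_mul_cancel₀ (by positivity)
  rw [← hEB]
  exact energy_deriv_lt_linear_of_small hC hε hEt hsmall (hE_ineq t ht')
end
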